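/- arXiv:1303.1399 — 5 statements merged into one kernel-verified Lean document; each statement's English description precedes it below -/
import Mathlib

section
/- In a net with boundaries where distinct transitions have disjoint left-boundary connections and disjoint right-boundary connections, every non-trivial synchronisation (U,V) between nets N : k→l and M : l→m decomposes as a union of a mutually independent family of minimal synchronisations: there exists a family {(U_i,V_i)}_{i∈I} of minimal synchronisations, pairwise independent, with U = ⋃_i U_i and V = ⋃_i V_i. -/
/-- A net with boundaries `N : k → l` with places `P` and transitions `T`. -/
structure Net (P : Type) (T : Type) (k l : ℕ) where
  pre : T → Set P
  post : T → Set P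
  src : T → Set (Fin k)
  tgt : T → Set (Fin l)

namespace Net

variable {P Q R : Type} {T₁ T₂ T₃ : Type} {k l m n : ℕ}

/-- Distinct transitions have disjoint boundary connections. -/
def BoundaryInj (N : Net P T₁ k l) : Prop :=
  ∀ t t' : T₁, t ≠ t' → N.src t ∩ N.src t' = ∅ ∧ N.tgt t ∩ N.tgt t' = ∅

def preSet (N : Net P T₁ k l) (U : Set T₁) : Set P := ⋃ t ∈ U, N.pre t
def postSet (N : Net P T₁ k l) (U : Set T₁) : Set P := ⋃ t ∈ U, N.post t
def srcSet (N : Net P T₁ k l) (U : Set T₁) : Set (Fin k) := ⋃ t ∈ U, N.src t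
def tgtSet (N : Net P T₁ k l) (U : Set T₁) : Set (Fin l) := ⋃ t ∈ U, N.tgt t

/-- Mutual independence of a set of transitions. -/
def MI (N : Net P T₁ k l) (U : Set T₁) : Prop :=
  ∀ t ∈ U, ∀ t' ∈ U, t ≠ t' →
    (N.pre t ∪ N.post t) ∩ (N.pre t' ∪ N.post t') = ∅

/-- The (1-bounded) step transition relation on markings. -/
def Step (N : Net P T₁ k l) (X : Set P) (α : Set (Fin k)) (β : Set (Fin l))
    (X' : Set P) : Prop :=
  ∃ U : Set T₁, N.MI U ∧ N.preSet U ⊆ X ∧ N.postSet U ∩ X = ∅ ∧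
    X' = (X \ N.preSet U) ∪ N.postSet U ∧ N.srcSet U = α ∧ N.tgtSet U = β

/-- A synchronisation between `N : k → l` and `M : l → m`. -/
def Sync (N : Net P T₁ k l) (M : Net Q T₂ l m) (U : Set T₁) (V : Set T₂) : Prop :=
  N.MI U ∧ M.MI V ∧ N.tgtSet U = M.srcSet V

/-- A minimal synchronisation: non-trivial, and any synchronisation below it is
trivial (or the synchronisation itself). -/
def MinSync (N : Net P T₁ k l) (M : Net Q T₂ l m) (U : Set T₁) (V : Set T₂) : Prop :=
  Sync N M U V ∧ ¬(U = ∅ ∧ V = ∅) ∧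
    ∀ U' V', U' ⊆ U → V' ⊆ V → Sync N M U' V' →
      (U' = ∅ ∧ V' = ∅) ∨ (U' = U ∧ V' = V)

/-- Independence of two synchronisations: unions componentwise MI, and disjoint. -/
def IndepSync (N : Net P T₁ k l) (M : Net Q T₂ l m)
    (s s' : Set T₁ × Set T₂) : Prop :=
  N.MI (s.1 ∪ s'.1) ∧ M.MI (s.2 ∪ s'.2) ∧ s.1 ∩ s'.1 = ∅ ∧ s.2 ∩ s'.2 = ∅

/-- Composition `N ; M` of nets along a common boundary. -/
def comp (N : Net P T₁ k l) (M : Net Q T₂ l m) :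
    Net (P ⊕ Q) {s : Set T₁ × Set T₂ // MinSync N M s.1 s.2} k m where
  pre s := Sum.inl '' N.preSet s.1.1 ∪ Sum.inr '' M.preSet s.1.2
  post s := Sum.inl '' N.postSet s.1.1 ∪ Sum.inr '' M.postSet s.1.2
  src s := N.srcSet s.1.1
  tgt s := M.tgtSet s.1.2

/-- Tensor (parallel composition) of nets. -/
def tensor (M : Net P T₁ k l) (N : Net Q T₂ m n) :
    Net (P ⊕ Q) (T₁ ⊕ T₂) (k + m) (l + n) where
  pre := Sum.elim (fun t => Sum.inl '' M.pre t) (fun t => Sum.inr '' N.pre t)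
  post := Sum.elim (fun t => Sum.inl '' M.post t) (fun t => Sum.inr '' N.post t)
  src := Sum.elim (fun t => Fin.castAdd m '' M.src t) (fun t => Fin.natAdd k '' N.src t)
  tgt := Sum.elim (fun t => Fin.castAdd n '' M.tgt t) (fun t => Fin.natAdd l '' N.tgt t)

/-- Disjoint union of markings. -/
def mU (X : Set P) (Y : Set Q) : Set (P ⊕ Q) := Sum.inl '' X ∪ Sum.inr '' Y

/-- Traces: sequences of consecutive step transitions, recorded by their labels. -/
def Trace (N : Net P T₁ k l) :
    Set P → List (Set (Fin k) × Set (Fin l)) → Set P → Prop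
  | X, [], X' => X = X'
  | X, ab :: w, X' => ∃ X'', N.Step X ab.1 ab.2 X'' ∧ N.Trace X'' w X'

/-- Epsilon (internal) steps. -/
def EpsStep (N : Net P T₁ k l) (X X' : Set P) : Prop := N.Step X ∅ ∅ X'

/-- The weak transition relation. -/
def Weak (N : Net P T₁ k l) (X : Set P) (α : Set (Fin k)) (β : Set (Fin l))
    (X' : Set P) : Prop :=
  ∃ X'' X''', Relation.ReflTransGen N.EpsStep X X'' ∧ N.Step X'' α β X''' ∧
    Relation.ReflTransGen N.EpsStep X''' X'

end Net

/-- An NFA with boundaries `A : k → l`: alphabet `{0,1}^k × {0,1}^l`. -/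
structure BNFA (S : Type) (k l : ℕ) where
  step : S → Set (Fin k) × Set (Fin l) → S → Prop
  start : Set S
  accept : Set S

namespace BNFA

variable {S S' S'' : Type} {k l m n : ℕ}

def Run (A : BNFA S k l) : S → List (Set (Fin k) × Set (Fin l)) → S → Prop
  | s, [], s' => s = s'
  | s, a :: w, s' => ∃ s₁, A.step s a s₁ ∧ A.Run s₁ w s'

def Lang (A : BNFA S k l) : Set (List (Set (Fin k) × Set (Fin l))) :=
  {w | ∃ s ∈ A.start, ∃ s' ∈ A.accept, A.Run s w s'}

/-- Sequential composition of NFAs with boundaries (synchronising product). -/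
def comp (A : BNFA S k l) (B : BNFA S' l m) : BNFA (S × S') k m where
  step p a q := ∃ γ, A.step p.1 (a.1, γ) q.1 ∧ B.step p.2 (γ, a.2) q.2
  start := {p | p.1 ∈ A.start ∧ p.2 ∈ B.start}
  accept := {p | p.1 ∈ A.accept ∧ p.2 ∈ B.accept}

/-- Tensor of NFAs with boundaries. -/
def tensor (A : BNFA S k l) (B : BNFA S' m n) : BNFA (S × S') (k + m) (l + n) where
  step p a q :=
    A.step p.1 (Fin.castAdd m ⁻¹' a.1, Fin.castAdd n ⁻¹' a.2) q.1 ∧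
    B.step p.2 (Fin.natAdd k ⁻¹' a.1, Fin.natAdd l ⁻¹' a.2) q.2
  start := {p | p.1 ∈ A.start ∧ p.2 ∈ B.start}
  accept := {p | p.1 ∈ A.accept ∧ p.2 ∈ B.accept}

/-- Isomorphism of NFAs with boundaries. -/
def Iso (A : BNFA S k l) (B : BNFA S' k l) : Prop :=
  ∃ e : S ≃ S', (∀ s a s', A.step s a s' ↔ B.step (e s) a (e s')) ∧
    (∀ s, s ∈ A.start ↔ e s ∈ B.start) ∧ (∀ s, s ∈ A.accept ↔ e s ∈ B.accept)

/-- Epsilon transitions of an NFA with boundaries. -/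
def EpsA (A : BNFA S k l) (s s' : S) : Prop := A.step s (∅, ∅) s'

/-- Epsilon closure of an NFA with boundaries. -/
def epsClose (A : BNFA S k l) : BNFA S k l where
  step s a s' := ∃ s₁ s₂, Relation.ReflTransGen A.EpsA s s₁ ∧ A.step s₁ a s₂ ∧
    Relation.ReflTransGen A.EpsA s₂ s'
  start := A.start
  accept := A.accept

end BNFA

/-- The step-semantics NFA of a net with boundaries, with given initial and
final sets of markings. -/
def netNFA {P T : Type} {k l : ℕ} (N : Net P T k l)
    (I F : Set (Set P)) : BNFA (Set P) k l where
  step X a X' := N.Step X a.1 a.2 X'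
  start := I
  accept := F

/-- A bundled NFA with boundaries. -/
structure BBNFA (k l : ℕ) where
  S : Type
  nfa : BNFA S k l

section SyncDecompAux

variable {P Q T₁ T₂ : Type} {k l m : ℕ}

/-- Adjacency between transitions of the two nets via shared boundary ports. -/
private def SAdj (N : Net P T₁ k l) (M : Net Q T₂ l m) :
    T₁ ⊕ T₂ → T₁ ⊕ T₂ → Prop
  | Sum.inl u, Sum.inr v => (N.tgt u ∩ M.src v).Nonempty
  | Sum.inr v, Sum.inl u => (N.tgt u ∩ M.src v).Nonempty
  | _, _ => False

private def syncSetoid (N : Net P T₁ k l) (M : Net Q T₂ l m) (U : Set T₁) (V : Set T₂) :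
    Setoid {x : T₁ ⊕ T₂ // Sum.elim (· ∈ U) (· ∈ V) x} :=
  Relation.EqvGen.setoid (fun a b => SAdj N M a.1 b.1)

private def syncF (N : Net P T₁ k l) (M : Net Q T₂ l m) (U : Set T₁) (V : Set T₂)
    (i : Quotient (syncSetoid N M U V)) : Set T₁ × Set T₂ :=
  ({u | ∃ h : u ∈ U, Quotient.mk (syncSetoid N M U V) ⟨Sum.inl u, h⟩ = i},
   {v | ∃ h : v ∈ V, Quotient.mk (syncSetoid N M U V) ⟨Sum.inr v, h⟩ = i})

private lemma sync_adj_step {N : Net P T₁ k l} {M : Net Q T₂ l m}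
    (hN : N.BoundaryInj) (hM : M.BoundaryInj)
    {U' : Set T₁} {V' : Set T₂} (heq : N.tgtSet U' = M.srcSet V')
    {u : T₁} {v : T₂} (h : (N.tgt u ∩ M.src v).Nonempty) : u ∈ U' ↔ v ∈ V' := by
  obtain ⟨x, hxu, hxv⟩ := h
  constructor
  · intro hu
    have hx : x ∈ M.srcSet V' := by
      rw [← heq]
      exact Set.mem_biUnion hu hxu
    simp only [Net.srcSet, Set.mem_iUnion] at hx
    obtain ⟨v', hv', hxv'⟩ := hx
    rcases eq_or_ne v v' with rfl | hne
    · exact hv'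
    · have h0 := (hM v v' hne).1
      have : x ∈ M.src v ∩ M.src v' := ⟨hxv, hxv'⟩
      rw [h0] at this
      exact this.elim
  · intro hv
    have hx : x ∈ N.tgtSet U' := by
      rw [heq]
      exact Set.mem_biUnion hv hxv
    simp only [Net.tgtSet, Set.mem_iUnion] at hx
    obtain ⟨u', hu', hxu'⟩ := hx
    rcases eq_or_ne u u' with rfl | hne
    · exact hu'
    · have h0 := (hN u u' hne).2
      have : x ∈ N.tgt u ∩ N.tgt u' := ⟨hxu, hxu'⟩
      rw [h0] at this
      exact this.elim

private lemma sync_closure {N : Net P T₁ k l} {M : Net Q T₂ l m}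
    (hN : N.BoundaryInj) (hM : M.BoundaryInj)
    {U : Set T₁} {V : Set T₂} {U' : Set T₁} {V' : Set T₂}
    (heq : N.tgtSet U' = M.srcSet V')
    {a b : {x : T₁ ⊕ T₂ // Sum.elim (· ∈ U) (· ∈ V) x}}
    (h : Relation.EqvGen (fun a b => SAdj N M a.1 b.1) a b) :
    (Sum.elim (· ∈ U') (· ∈ V') a.1 ↔ Sum.elim (· ∈ U') (· ∈ V') b.1) := by
  induction h with
  | rel a b hab =>
    obtain ⟨a, ha⟩ := a
    obtain ⟨b, hb⟩ := b
    cases a with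
    | inl u =>
      cases b with
      | inl u' => exact (show False from hab).elim
      | inr v => exact sync_adj_step hN hM heq hab
    | inr v =>
      cases b with
      | inl u => exact (sync_adj_step hN hM heq hab).symm
      | inr v' => exact (show False from hab).elim
  | refl a => exact Iff.rfl
  | symm _ _ _ ih => exact ih.symm
  | trans _ _ _ _ _ ih1 ih2 => exact ih1.trans ih2

end SyncDecompAux

open Net in
/-- every non-trivial synchronisation decomposes as a union of a
mutually independent family of minimal synchronisations. -/
theorem nontrivial_sync_decomposes {P Q T₁ T₂ : Type} {k l m : ℕ}
    (N : Net P T₁ k l) (M : Net Q T₂ l m)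
    (hN : N.BoundaryInj) (hM : M.BoundaryInj)
    (U : Set T₁) (V : Set T₂) (hsync : Sync N M U V) (hnt : ¬(U = ∅ ∧ V = ∅)) :
    ∃ (I : Type) (f : I → Set T₁ × Set T₂),
      (∀ i, MinSync N M (f i).1 (f i).2) ∧
      (∀ i j, i ≠ j → IndepSync N M (f i) (f j)) ∧
      U = ⋃ i, (f i).1 ∧ V = ⋃ i, (f i).2 := by
  clear hnt
  obtain ⟨hMIU, hMIV, htgt⟩ := hsync
  refine ⟨Quotient (syncSetoid N M U V), syncF N M U V, ?_, ?_, ?_, ?_⟩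
  case _ =>
    -- helpers
    intro i
    have hUsub : (syncF N M U V i).1 ⊆ U := fun u hu => hu.1
    have hVsub : (syncF N M U V i).2 ⊆ V := fun v hv => hv.1
    have hMIU' : N.MI (syncF N M U V i).1 :=
      fun t ht t' ht' hne => hMIU t (hUsub ht) t' (hUsub ht') hne
    have hMIV' : M.MI (syncF N M U V i).2 :=
      fun t ht t' ht' hne => hMIV t (hVsub ht) t' (hVsub ht') hne
    have htgt' : N.tgtSet (syncF N M U V i).1 = M.srcSet (syncF N M U V i).2 := by
      ext x
      simp only [Net.tgtSet, Net.srcSet, Set.mem_iUnion]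
      constructor
      · rintro ⟨u, ⟨hu, hui⟩, hxu⟩
        have hx : x ∈ M.srcSet V := by
          rw [← htgt]
          exact Set.mem_biUnion hu hxu
        simp only [Net.srcSet, Set.mem_iUnion] at hx
        obtain ⟨v, hv, hxv⟩ := hx
        refine ⟨v, ⟨hv, ?_⟩, hxv⟩
        rw [← hui]
        exact Quotient.sound (Relation.EqvGen.rel _ _ (⟨x, hxu, hxv⟩ : (N.tgt u ∩ M.src v).Nonempty))
      · rintro ⟨v, ⟨hv, hvi⟩, hxv⟩
        have hx : x ∈ N.tgtSet U := by
          rw [htgt]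
          exact Set.mem_biUnion hv hxv
        simp only [Net.tgtSet, Set.mem_iUnion] at hx
        obtain ⟨u, hu, hxu⟩ := hx
        refine ⟨u, ⟨hu, ?_⟩, hxu⟩
        rw [← hvi]
        exact Quotient.sound (Relation.EqvGen.rel _ _ (⟨x, hxu, hxv⟩ : (N.tgt u ∩ M.src v).Nonempty))
    refine ⟨⟨hMIU', hMIV', htgt'⟩, ?_, ?_⟩
    · -- non-trivial
      obtain ⟨w, hw⟩ := Quotient.exists_rep i
      obtain ⟨x, hx⟩ := w
      cases x with
      | inl u =>
        rintro ⟨h1, h2⟩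
        have : u ∈ (syncF N M U V i).1 := ⟨hx, hw⟩
        rw [h1] at this
        exact this
      | inr v =>
        rintro ⟨h1, h2⟩
        have : v ∈ (syncF N M U V i).2 := ⟨hx, hw⟩
        rw [h2] at this
        exact this
    · -- minimality
      intro U' V' hU' hV' hsync'
      obtain ⟨hMIU'', hMIV'', heq'⟩ := hsync'
      by_cases hne : U' = ∅ ∧ V' = ∅
      · exact Or.inl hne
      · right
        -- find a witness element of (U', V') as an element of the subtype
        have hwit : ∃ w : {x : T₁ ⊕ T₂ // Sum.elim (· ∈ U) (· ∈ V) x},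
            Sum.elim (· ∈ U') (· ∈ V') w.1 ∧ Quotient.mk (syncSetoid N M U V) w = i := by
          rcases not_and_or.mp hne with h | h
          · obtain ⟨u, hu⟩ := Set.nonempty_iff_ne_empty.mpr h
            obtain ⟨huU, hui⟩ := hU' hu
            exact ⟨⟨Sum.inl u, huU⟩, hu, hui⟩
          · obtain ⟨v, hv⟩ := Set.nonempty_iff_ne_empty.mpr h
            obtain ⟨hvV, hvi⟩ := hV' hv
            exact ⟨⟨Sum.inr v, hvV⟩, hv, hvi⟩
        obtain ⟨w, hwmem, hwi⟩ := hwit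
        constructor
        · apply Set.Subset.antisymm (fun u hu => hU' hu)
          rintro u ⟨hu, hui⟩
          have hrel : Relation.EqvGen (fun a b => SAdj N M a.1 b.1) ⟨Sum.inl u, hu⟩ w :=
            Quotient.exact (hui.trans hwi.symm)
          exact (sync_closure hN hM heq' hrel).mpr hwmem
        · apply Set.Subset.antisymm (fun v hv => hV' hv)
          rintro v ⟨hv, hvi⟩
          have hrel : Relation.EqvGen (fun a b => SAdj N M a.1 b.1) ⟨Sum.inr v, hv⟩ w :=
            Quotient.exact (hvi.trans hwi.symm)
          exact (sync_closure hN hM heq' hrel).mpr hwmem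
  case _ =>
    intro i j hij
    refine ⟨?_, ?_, ?_, ?_⟩
    · intro t ht t' ht' hne
      exact hMIU t (by rcases ht with h | h <;> exact h.1)
        t' (by rcases ht' with h | h <;> exact h.1) hne
    · intro t ht t' ht' hne
      exact hMIV t (by rcases ht with h | h <;> exact h.1)
        t' (by rcases ht' with h | h <;> exact h.1) hne
    · ext u
      simp only [Set.mem_inter_iff, Set.mem_empty_iff_false, iff_false, not_and]
      rintro ⟨hu, hui⟩ ⟨hu', huj⟩
      exact hij (hui.symm.trans huj)
    · ext v
      simp only [Set.mem_inter_iff, Set.mem_empty_iff_false, iff_false, not_and]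
      rintro ⟨hv, hvi⟩ ⟨hv', hvj⟩
      exact hij (hvi.symm.trans hvj)
  case _ =>
    ext u
    simp only [Set.mem_iUnion]
    exact ⟨fun hu => ⟨Quotient.mk (syncSetoid N M U V) ⟨Sum.inl u, hu⟩, hu, rfl⟩,
      fun ⟨i, hi⟩ => hi.1⟩
  case _ =>
    ext v
    simp only [Set.mem_iUnion]
    exact ⟨fun hv => ⟨Quotient.mk (syncSetoid N M U V) ⟨Sum.inr v, hv⟩, hv, rfl⟩,
      fun ⟨i, hi⟩ => hi.1⟩
end

section
/- If (U,V) and (U',V') ⊆ (U,V) are synchronisations between nets N : k→l and M : l→m (with the boundary-injectivity assumption that distinct transitions have disjoint boundary connections), then (U \ U', V \ V') is also a synchronisation. -/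
open Net in
/-- if `(U', V') ⊆ (U, V)` are synchronisations, then so is
`(U \ U', V \ V')`. -/
theorem sync_diff {P Q T₁ T₂ : Type} {k l m : ℕ}
    (N : Net P T₁ k l) (M : Net Q T₂ l m)
    (hN : N.BoundaryInj) (hM : M.BoundaryInj)
    (U U' : Set T₁) (V V' : Set T₂)
    (h : Sync N M U V) (h' : Sync N M U' V') (hU : U' ⊆ U) (hV : V' ⊆ V) :
    Sync N M (U \ U') (V \ V') := by
  obtain ⟨hMU, hMV, hE⟩ := h
  obtain ⟨hMU', hMV', hE'⟩ := h'
  refine ⟨fun t ht t' ht' hne => hMU t ht.1 t' ht'.1 hne,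
          fun t ht t' ht' hne => hMV t ht.1 t' ht'.1 hne, ?_⟩
  have key : ∀ {α β : Type} {a b : ℕ} (X : Net α β a b) (W W' : Set β),
      X.BoundaryInj → W' ⊆ W →
      X.tgtSet (W \ W') = X.tgtSet W \ X.tgtSet W' := by
    intro α β a b X W W' hinj hsub
    ext x
    simp only [Net.tgtSet, Set.mem_iUnion, Set.mem_diff]
    constructor
    · rintro ⟨t, ⟨htW, htW'⟩, hx⟩
      refine ⟨⟨t, htW, hx⟩, ?_⟩
      rintro ⟨t', ht', hx'⟩
      have hne : t ≠ t' := fun h => htW' (h ▸ ht')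
      have := (hinj t t' hne).2
      exact absurd (Set.mem_inter hx hx') (by simp [this])
    · rintro ⟨⟨t, htW, hx⟩, hnot⟩
      exact ⟨t, ⟨htW, fun ht' => hnot ⟨t, ht', hx⟩⟩, hx⟩
  have key2 : ∀ {α β : Type} {a b : ℕ} (X : Net α β a b) (W W' : Set β),
      X.BoundaryInj → W' ⊆ W →
      X.srcSet (W \ W') = X.srcSet W \ X.srcSet W' := by
    intro α β a b X W W' hinj hsub
    ext x
    simp only [Net.srcSet, Set.mem_iUnion, Set.mem_diff]
    constructor
    · rintro ⟨t, ⟨htW, htW'⟩, hx⟩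
      refine ⟨⟨t, htW, hx⟩, ?_⟩
      rintro ⟨t', ht', hx'⟩
      have hne : t ≠ t' := fun h => htW' (h ▸ ht')
      have := (hinj t t' hne).1
      exact absurd (Set.mem_inter hx hx') (by simp [this])
    · rintro ⟨⟨t, htW, hx⟩, hnot⟩
      exact ⟨t, ⟨htW, fun ht' => hnot ⟨t, ht', hx⟩⟩, hx⟩
  rw [key N U U' hN hU, key2 M V V' hM hV, hE, hE']
end

section
/- Compositionality of the step semantics: for nets with boundaries N : k→l and M : l→m, and markings X, X' ⊆ P_N, Y, Y' ⊆ P_M, labels α ∈ {0,1}^k, β ∈ {0,1}^m, the composite net N;M has a step transition (X ⊎ Y) --α/β--> (X' ⊎ Y') if and only if there exists γ ∈ {0,1}^l with X --α/γ--> X' in N and Y --γ/β--> Y' in M. -/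
namespace Net

variable {P Q R : Type} {T₁ T₂ T₃ : Type} {k l m n : ℕ}

variable {P Q : Type} {T₁ T₂ : Type} {k l m : ℕ}

lemma mem_mU_inl {X : Set P} {Y : Set Q} {p : P} : Sum.inl p ∈ mU X Y ↔ p ∈ X := by
  simp [mU]

lemma mem_mU_inr {X : Set P} {Y : Set Q} {q : Q} : Sum.inr q ∈ mU X Y ↔ q ∈ Y := by
  simp [mU]

lemma mU_eq_mU {X X' : Set P} {Y Y' : Set Q} : mU X Y = mU X' Y' ↔ X = X' ∧ Y = Y' := by
  constructor
  · intro h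
    constructor
    · ext p; rw [← mem_mU_inl (Y := Y), h, mem_mU_inl]
    · ext q; rw [← mem_mU_inr (X := X), h, mem_mU_inr]
  · rintro ⟨rfl, rfl⟩; rfl

lemma MI_mono {N : Net P T₁ k l} {U S : Set T₁} (h : N.MI U) (hs : S ⊆ U) : N.MI S :=
  fun t ht t' ht' => h t (hs ht) t' (hs ht')

lemma mem_preSet {N : Net P T₁ k l} {U : Set T₁} {p : P} :
    p ∈ N.preSet U ↔ ∃ t ∈ U, p ∈ N.pre t := by simp [preSet]

lemma mem_postSet {N : Net P T₁ k l} {U : Set T₁} {p : P} :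
    p ∈ N.postSet U ↔ ∃ t ∈ U, p ∈ N.post t := by simp [postSet]

lemma mem_srcSet {N : Net P T₁ k l} {U : Set T₁} {i : Fin k} :
    i ∈ N.srcSet U ↔ ∃ t ∈ U, i ∈ N.src t := by simp [srcSet]

lemma mem_tgtSet {N : Net P T₁ k l} {U : Set T₁} {i : Fin l} :
    i ∈ N.tgtSet U ↔ ∃ t ∈ U, i ∈ N.tgt t := by simp [tgtSet]

section Decomp

variable (N : Net P T₁ k l) (M : Net Q T₂ l m) (U : Set T₁) (V : Set T₂)

/-- Edge relation of the synchronisation graph between `U` and `V`. -/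
def SEdge (x y : T₁ ⊕ T₂) : Prop :=
  ∃ t ∈ U, ∃ v ∈ V, (N.tgt t ∩ M.src v).Nonempty ∧
    ((x = Sum.inl t ∧ y = Sum.inr v) ∨ (x = Sum.inr v ∧ y = Sum.inl t))

def SR : T₁ ⊕ T₂ → T₁ ⊕ T₂ → Prop := Relation.ReflTransGen (SEdge N M U V)

/-- Membership predicate for vertices of the graph. -/
def SOK : T₁ ⊕ T₂ → Prop := Sum.elim (· ∈ U) (· ∈ V)

def comp1 (x : T₁ ⊕ T₂) : Set T₁ := {t | SR N M U V x (Sum.inl t)}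

def comp2 (x : T₁ ⊕ T₂) : Set T₂ := {v | SR N M U V x (Sum.inr v)}

variable {N M U V}

lemma SEdge_symm {x y : T₁ ⊕ T₂} (h : SEdge N M U V x y) : SEdge N M U V y x := by
  obtain ⟨t, ht, v, hv, hi, hc⟩ := h
  exact ⟨t, ht, v, hv, hi, by tauto⟩

lemma SR_symm {x y : T₁ ⊕ T₂} (h : SR N M U V x y) : SR N M U V y x := by
  induction h with
  | refl => exact Relation.ReflTransGen.refl
  | tail _ h2 ih => exact Relation.ReflTransGen.head (SEdge_symm h2) ih

lemma SEdge_ok {x y : T₁ ⊕ T₂} (h : SEdge N M U V x y) : SOK U V y := by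
  obtain ⟨t, ht, v, hv, _, hc | hc⟩ := h
  · rw [hc.2]; exact hv
  · rw [hc.2]; exact ht

lemma SR_ok {x y : T₁ ⊕ T₂} (hx : SOK U V x) (h : SR N M U V x y) : SOK U V y := by
  induction h with
  | refl => exact hx
  | tail _ h2 _ => exact SEdge_ok h2

lemma comp1_subset {x : T₁ ⊕ T₂} (hx : SOK U V x) : comp1 N M U V x ⊆ U :=
  fun _ ht => SR_ok hx ht

lemma comp2_subset {x : T₁ ⊕ T₂} (hx : SOK U V x) : comp2 N M U V x ⊆ V :=
  fun _ hv => SR_ok hx hv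

lemma comp_eq_of_SR {x y : T₁ ⊕ T₂} (h : SR N M U V x y) :
    comp1 N M U V x = comp1 N M U V y ∧ comp2 N M U V x = comp2 N M U V y := by
  constructor
  · ext t
    exact ⟨fun h' => Relation.ReflTransGen.trans (SR_symm h) h',
      fun h' => Relation.ReflTransGen.trans h h'⟩
  · ext v
    exact ⟨fun h' => Relation.ReflTransGen.trans (SR_symm h) h',
      fun h' => Relation.ReflTransGen.trans h h'⟩

variable (hU : N.MI U) (hV : M.MI V) (hb : N.tgtSet U = M.srcSet V)

include hU hV hb in
lemma comp_sync {x : T₁ ⊕ T₂} (hx : SOK U V x) :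
    Sync N M (comp1 N M U V x) (comp2 N M U V x) := by
  refine ⟨MI_mono hU (comp1_subset hx), MI_mono hV (comp2_subset hx), ?_⟩
  ext i
  simp only [mem_tgtSet, mem_srcSet]
  constructor
  · rintro ⟨t, ht, hi⟩
    have htU : t ∈ U := comp1_subset hx ht
    have : i ∈ M.srcSet V := by
      rw [← hb]; exact mem_tgtSet.2 ⟨t, htU, hi⟩
    obtain ⟨v, hv, hiv⟩ := mem_srcSet.1 this
    refine ⟨v, ?_, hiv⟩
    exact Relation.ReflTransGen.tail ht ⟨t, htU, v, hv, ⟨i, hi, hiv⟩, Or.inl ⟨rfl, rfl⟩⟩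
  · rintro ⟨v, hv, hi⟩
    have hvV : v ∈ V := comp2_subset hx hv
    have : i ∈ N.tgtSet U := by
      rw [hb]; exact mem_srcSet.2 ⟨v, hvV, hi⟩
    obtain ⟨t, ht, hit⟩ := mem_tgtSet.1 this
    refine ⟨t, ?_, hit⟩
    exact Relation.ReflTransGen.tail hv ⟨t, ht, v, hvV, ⟨i, hit, hi⟩, Or.inr ⟨rfl, rfl⟩⟩

end Decomp

section CompSets

variable {P Q : Type} {T₁ T₂ : Type} {k l m : ℕ}
variable {N : Net P T₁ k l} {M : Net Q T₂ l m}

lemma mem_prepostSet {U : Set T₁} {p : P} :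
    p ∈ N.preSet U ∪ N.postSet U ↔ ∃ t ∈ U, p ∈ N.pre t ∪ N.post t := by
  simp only [Set.mem_union, mem_preSet, mem_postSet]; aesop

lemma comp_places (s : {s : Set T₁ × Set T₂ // MinSync N M s.1 s.2}) :
    (N.comp M).pre s ∪ (N.comp M).post s =
      mU (N.preSet (s : Set T₁ × Set T₂).1 ∪ N.postSet (s : Set T₁ × Set T₂).1)
         (M.preSet (s : Set T₁ × Set T₂).2 ∪ M.postSet (s : Set T₁ × Set T₂).2) := by
  ext z; cases z <;> simp [comp, mU] <;> tauto

lemma preSet_biUnion {ι : Type*} (W : Set ι) (f : ι → Set T₁) :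
    N.preSet (⋃ s ∈ W, f s) = ⋃ s ∈ W, N.preSet (f s) := by
  ext p; simp only [preSet, Set.mem_iUnion]; aesop

lemma postSet_biUnion {ι : Type*} (W : Set ι) (f : ι → Set T₁) :
    N.postSet (⋃ s ∈ W, f s) = ⋃ s ∈ W, N.postSet (f s) := by
  ext p; simp only [postSet, Set.mem_iUnion]; aesop

lemma srcSet_biUnion {ι : Type*} (W : Set ι) (f : ι → Set T₁) :
    N.srcSet (⋃ s ∈ W, f s) = ⋃ s ∈ W, N.srcSet (f s) := by
  ext p; simp only [srcSet, Set.mem_iUnion]; aesop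

lemma tgtSet_biUnion {ι : Type*} (W : Set ι) (f : ι → Set T₁) :
    N.tgtSet (⋃ s ∈ W, f s) = ⋃ s ∈ W, N.tgtSet (f s) := by
  ext p; simp only [tgtSet, Set.mem_iUnion]; aesop

lemma comp_preSet (W : Set {s : Set T₁ × Set T₂ // MinSync N M s.1 s.2}) :
    (N.comp M).preSet W =
      mU (N.preSet (⋃ s ∈ W, (s : Set T₁ × Set T₂).1))
         (M.preSet (⋃ s ∈ W, (s : Set T₁ × Set T₂).2)) := by
  rw [preSet_biUnion, preSet_biUnion]
  ext z; cases z <;>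
    simp [preSet, comp, mU, Net.preSet, Set.mem_iUnion] <;> tauto

lemma comp_postSet (W : Set {s : Set T₁ × Set T₂ // MinSync N M s.1 s.2}) :
    (N.comp M).postSet W =
      mU (N.postSet (⋃ s ∈ W, (s : Set T₁ × Set T₂).1))
         (M.postSet (⋃ s ∈ W, (s : Set T₁ × Set T₂).2)) := by
  rw [postSet_biUnion, postSet_biUnion]
  ext z; cases z <;>
    simp [postSet, comp, mU, Net.postSet, Set.mem_iUnion] <;> tauto

lemma comp_srcSet (W : Set {s : Set T₁ × Set T₂ // MinSync N M s.1 s.2}) :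
    (N.comp M).srcSet W = N.srcSet (⋃ s ∈ W, (s : Set T₁ × Set T₂).1) := by
  rw [srcSet_biUnion]
  ext i; simp [srcSet, comp, Net.srcSet, Set.mem_iUnion]

lemma comp_tgtSet (W : Set {s : Set T₁ × Set T₂ // MinSync N M s.1 s.2}) :
    (N.comp M).tgtSet W = M.tgtSet (⋃ s ∈ W, (s : Set T₁ × Set T₂).2) := by
  rw [tgtSet_biUnion (N := M)]
  ext i; simp [tgtSet, comp, Net.tgtSet, Set.mem_iUnion]

end CompSets
section Decomp2

variable {P Q : Type} {T₁ T₂ : Type} {k l m : ℕ}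
variable {N : Net P T₁ k l} {M : Net Q T₂ l m} {U : Set T₁} {V : Set T₂}
variable (hN : N.BoundaryInj) (hM : M.BoundaryInj)
variable (hU : N.MI U) (hV : M.MI V) (hb : N.tgtSet U = M.srcSet V)

include hN hM hU hV hb in
lemma comp_minsync {x : T₁ ⊕ T₂} (hx : SOK U V x) :
    MinSync N M (comp1 N M U V x) (comp2 N M U V x) := by
  refine ⟨comp_sync hU hV hb hx, ?_, ?_⟩
  · rintro ⟨h1, h2⟩
    cases x with
    | inl t =>
      have : t ∈ comp1 N M U V (Sum.inl t) := Relation.ReflTransGen.refl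
      rw [h1] at this; exact this
    | inr v =>
      have : v ∈ comp2 N M U V (Sum.inr v) := Relation.ReflTransGen.refl
      rw [h2] at this; exact this
  · intro U' V' hU' hV' hsync'
    by_cases hne : U' = ∅ ∧ V' = ∅
    · exact Or.inl hne
    right
    have hy0 : ∃ y₀ : T₁ ⊕ T₂, Sum.elim (· ∈ U') (· ∈ V') y₀ ∧ SR N M U V x y₀ := by
      rcases Set.eq_empty_or_nonempty U' with h | ⟨t, ht⟩
      · rcases Set.eq_empty_or_nonempty V' with h2 | ⟨v, hv⟩
        · exact absurd ⟨h, h2⟩ hne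
        · exact ⟨Sum.inr v, hv, hV' hv⟩
      · exact ⟨Sum.inl t, ht, hU' ht⟩
    obtain ⟨y₀, hy₀, hxy₀⟩ := hy0
    have hclose : ∀ y z : T₁ ⊕ T₂, Sum.elim (· ∈ U') (· ∈ V') y → SEdge N M U V y z →
        Sum.elim (· ∈ U') (· ∈ V') z := by
      rintro y z hy ⟨t, ht, v, hv, ⟨i, hit, hiv⟩, ⟨rfl, rfl⟩ | ⟨rfl, rfl⟩⟩
      · have hy' : t ∈ U' := hy
        have : i ∈ M.srcSet V' := by
          rw [← hsync'.2.2]; exact mem_tgtSet.2 ⟨t, hy', hit⟩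
        obtain ⟨v'', hv'', hiv''⟩ := mem_srcSet.1 this
        have hveq : v = v'' := by
          by_contra hne'
          have hd := (hM v v'' hne').1
          have : i ∈ M.src v ∩ M.src v'' := ⟨hiv, hiv''⟩
          rw [hd] at this; exact this
        show v ∈ V'
        rw [hveq]; exact hv''
      · have hy' : v ∈ V' := hy
        have : i ∈ N.tgtSet U' := by
          rw [hsync'.2.2]; exact mem_srcSet.2 ⟨v, hy', hiv⟩
        obtain ⟨t'', ht'', hit''⟩ := mem_tgtSet.1 this
        have hteq : t = t'' := by
          by_contra hne'
          have hd := (hN t t'' hne').2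
          have : i ∈ N.tgt t ∩ N.tgt t'' := ⟨hit, hit''⟩
          rw [hd] at this; exact this
        show t ∈ U'
        rw [hteq]; exact ht''
    have hall : ∀ z : T₁ ⊕ T₂, SR N M U V x z → Sum.elim (· ∈ U') (· ∈ V') z := by
      intro z hz
      have hyz : SR N M U V y₀ z := Relation.ReflTransGen.trans (SR_symm hxy₀) hz
      clear hz
      induction hyz with
      | refl => exact hy₀
      | tail _ h2 ih => exact hclose _ _ ih h2
    exact ⟨le_antisymm hU' (fun t ht => hall (Sum.inl t) ht),
      le_antisymm hV' (fun v hv => hall (Sum.inr v) hv)⟩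

include hN hM hU hV hb in
/-- Decomposition of a synchronisation into independent minimal synchronisations. -/
lemma sync_decomp :
    ∃ W : Set {s : Set T₁ × Set T₂ // MinSync N M s.1 s.2},
      (N.comp M).MI W ∧ (⋃ s ∈ W, (s : Set T₁ × Set T₂).1) = U ∧
        (⋃ s ∈ W, (s : Set T₁ × Set T₂).2) = V := by
  classical
  refine ⟨{s | ∃ x : T₁ ⊕ T₂, SOK U V x ∧
      (s : Set T₁ × Set T₂) = (comp1 N M U V x, comp2 N M U V x)}, ?_, ?_, ?_⟩
  · rintro s ⟨x, hx, hsx⟩ s' ⟨y, hy, hsy⟩ hss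
    have hnR : ¬ SR N M U V x y := by
      intro hR
      apply hss
      obtain ⟨h1, h2⟩ := comp_eq_of_SR hR
      apply Subtype.ext
      rw [hsx, hsy, h1, h2]
    have hd1 : ∀ t, t ∈ (s : Set T₁ × Set T₂).1 → t ∈ (s' : Set T₁ × Set T₂).1 → False := by
      intro t h1 h2
      rw [hsx] at h1; rw [hsy] at h2
      exact hnR (Relation.ReflTransGen.trans h1 (SR_symm h2))
    have hd2 : ∀ v, v ∈ (s : Set T₁ × Set T₂).2 → v ∈ (s' : Set T₁ × Set T₂).2 → False := by
      intro v h1 h2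
      rw [hsx] at h1; rw [hsy] at h2
      exact hnR (Relation.ReflTransGen.trans h1 (SR_symm h2))
    rw [comp_places, comp_places]
    ext z
    simp only [Set.mem_inter_iff, Set.mem_empty_iff_false, iff_false, not_and]
    intro hz1 hz2
    cases z with
    | inl p =>
      obtain ⟨t, ht, hp⟩ := mem_prepostSet.1 (mem_mU_inl.1 hz1)
      obtain ⟨t', ht', hp'⟩ := mem_prepostSet.1 (mem_mU_inl.1 hz2)
      have htt' : t ≠ t' := fun h => hd1 t ht (h ▸ ht')
      have htU : t ∈ U := by
        rw [hsx] at ht; exact comp1_subset hx ht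
      have htU' : t' ∈ U := by
        rw [hsy] at ht'; exact comp1_subset hy ht'
      have := hU t htU t' htU' htt'
      have : p ∈ (N.pre t ∪ N.post t) ∩ (N.pre t' ∪ N.post t') := ⟨hp, hp'⟩
      rw [hU t htU t' htU' htt'] at this; exact this
    | inr q =>
      obtain ⟨v, hv, hq⟩ := mem_prepostSet.1 (mem_mU_inr.1 hz1)
      obtain ⟨v', hv', hq'⟩ := mem_prepostSet.1 (mem_mU_inr.1 hz2)
      have hvv' : v ≠ v' := fun h => hd2 v hv (h ▸ hv')
      have hvV : v ∈ V := by
        rw [hsx] at hv; exact comp2_subset hx hv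
      have hvV' : v' ∈ V := by
        rw [hsy] at hv'; exact comp2_subset hy hv'
      have : q ∈ (M.pre v ∪ M.post v) ∩ (M.pre v' ∪ M.post v') := ⟨hq, hq'⟩
      rw [hV v hvV v' hvV' hvv'] at this; exact this
  · ext t
    simp only [Set.mem_iUnion, Set.mem_setOf_eq]
    constructor
    · rintro ⟨s, ⟨x, hx, hsx⟩, ht⟩
      rw [hsx] at ht
      exact comp1_subset hx ht
    · intro ht
      refine ⟨⟨(comp1 N M U V (Sum.inl t), comp2 N M U V (Sum.inl t)),
        comp_minsync hN hM hU hV hb ht⟩, ⟨Sum.inl t, ht, rfl⟩, ?_⟩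
      exact Relation.ReflTransGen.refl
  · ext v
    simp only [Set.mem_iUnion, Set.mem_setOf_eq]
    constructor
    · rintro ⟨s, ⟨x, hx, hsx⟩, hv⟩
      rw [hsx] at hv
      exact comp2_subset hx hv
    · intro hv
      refine ⟨⟨(comp1 N M U V (Sum.inr v), comp2 N M U V (Sum.inr v)),
        comp_minsync hN hM hU hV hb hv⟩, ⟨Sum.inr v, hv, rfl⟩, ?_⟩
      exact Relation.ReflTransGen.refl

end Decomp2
section MoreMU

variable {P Q : Type}

lemma mU_subset_mU {A X : Set P} {B Y : Set Q} :
    mU A B ⊆ mU X Y ↔ A ⊆ X ∧ B ⊆ Y := by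
  constructor
  · intro h
    exact ⟨fun p hp => mem_mU_inl.1 (h (mem_mU_inl.2 hp)),
      fun q hq => mem_mU_inr.1 (h (mem_mU_inr.2 hq))⟩
  · rintro ⟨h1, h2⟩ z hz
    cases z with
    | inl p => exact mem_mU_inl.2 (h1 (mem_mU_inl.1 hz))
    | inr q => exact mem_mU_inr.2 (h2 (mem_mU_inr.1 hz))

lemma mU_inter_mU {A X : Set P} {B Y : Set Q} :
    mU A B ∩ mU X Y = ∅ ↔ A ∩ X = ∅ ∧ B ∩ Y = ∅ := by
  constructor
  · intro h
    constructor
    · ext p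
      simp only [Set.mem_inter_iff, Set.mem_empty_iff_false, iff_false, not_and]
      intro h1 h2
      have : Sum.inl p ∈ mU A B ∩ mU X Y := ⟨mem_mU_inl.2 h1, mem_mU_inl.2 h2⟩
      rw [h] at this; exact this
    · ext q
      simp only [Set.mem_inter_iff, Set.mem_empty_iff_false, iff_false, not_and]
      intro h1 h2
      have : Sum.inr q ∈ mU A B ∩ mU X Y := ⟨mem_mU_inr.2 h1, mem_mU_inr.2 h2⟩
      rw [h] at this; exact this
  · rintro ⟨h1, h2⟩
    ext z
    simp only [Set.mem_inter_iff, Set.mem_empty_iff_false, iff_false, not_and]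
    intro hz1 hz2
    cases z with
    | inl p =>
      have : p ∈ A ∩ X := ⟨mem_mU_inl.1 hz1, mem_mU_inl.1 hz2⟩
      rw [h1] at this; exact this
    | inr q =>
      have : q ∈ B ∩ Y := ⟨mem_mU_inr.1 hz1, mem_mU_inr.1 hz2⟩
      rw [h2] at this; exact this

lemma mU_diff_union {X A C : Set P} {Y B D : Set Q} :
    (mU X Y \ mU A B) ∪ mU C D = mU ((X \ A) ∪ C) ((Y \ B) ∪ D) := by
  ext z; cases z <;> simp [mU]

end MoreMU
end Net

open Net in
/-- compositionality of the step semantics for `N ; M`. -/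
theorem step_compositionality {P Q T₁ T₂ : Type} {k l m : ℕ}
    (N : Net P T₁ k l) (M : Net Q T₂ l m)
    (hN : N.BoundaryInj) (hM : M.BoundaryInj)
    (X X' : Set P) (Y Y' : Set Q) (α : Set (Fin k)) (β : Set (Fin m)) :
    (N.comp M).Step (mU X Y) α β (mU X' Y') ↔
      ∃ γ : Set (Fin l), N.Step X α γ X' ∧ M.Step Y γ β Y' := by
  constructor
  · rintro ⟨W, hMIW, hpre, hpost, heq, hsrc, htgt⟩
    set U : Set T₁ := ⋃ s ∈ W, (s : Set T₁ × Set T₂).1 with hUdef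
    set V : Set T₂ := ⋃ s ∈ W, (s : Set T₁ × Set T₂).2 with hVdef
    have hMIU : N.MI U := by
      intro t ht t' ht' htt'
      simp only [hUdef, Set.mem_iUnion] at ht ht'
      obtain ⟨s, hsW, hts⟩ := ht
      obtain ⟨s', hs'W, hts'⟩ := ht'
      by_cases hss : s = s'
      · subst hss; exact s.prop.1.1 t hts t' hts' htt'
      · have hplace := hMIW s hsW s' hs'W hss
        rw [comp_places, comp_places] at hplace
        ext p
        simp only [Set.mem_inter_iff, Set.mem_empty_iff_false, iff_false, not_and]
        intro hp hp'
        have h1 : Sum.inl p ∈ mU (N.preSet (s : Set T₁ × Set T₂).1 ∪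
            N.postSet (s : Set T₁ × Set T₂).1) (M.preSet (s : Set T₁ × Set T₂).2 ∪
            M.postSet (s : Set T₁ × Set T₂).2) :=
          mem_mU_inl.2 (mem_prepostSet.2 ⟨t, hts, hp⟩)
        have h2 : Sum.inl p ∈ mU (N.preSet (s' : Set T₁ × Set T₂).1 ∪
            N.postSet (s' : Set T₁ × Set T₂).1) (M.preSet (s' : Set T₁ × Set T₂).2 ∪
            M.postSet (s' : Set T₁ × Set T₂).2) :=
          mem_mU_inl.2 (mem_prepostSet.2 ⟨t', hts', hp'⟩)
        have : Sum.inl p ∈ (∅ : Set (P ⊕ Q)) := hplace ▸ Set.mem_inter h1 h2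
        exact this
    have hMIV : M.MI V := by
      intro v hv v' hv' hvv'
      simp only [hVdef, Set.mem_iUnion] at hv hv'
      obtain ⟨s, hsW, hvs⟩ := hv
      obtain ⟨s', hs'W, hvs'⟩ := hv'
      by_cases hss : s = s'
      · subst hss; exact s.prop.1.2.1 v hvs v' hvs' hvv'
      · have hplace := hMIW s hsW s' hs'W hss
        rw [comp_places, comp_places] at hplace
        ext q
        simp only [Set.mem_inter_iff, Set.mem_empty_iff_false, iff_false, not_and]
        intro hq hq'
        have h1 : Sum.inr q ∈ mU (N.preSet (s : Set T₁ × Set T₂).1 ∪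
            N.postSet (s : Set T₁ × Set T₂).1) (M.preSet (s : Set T₁ × Set T₂).2 ∪
            M.postSet (s : Set T₁ × Set T₂).2) :=
          mem_mU_inr.2 (mem_prepostSet.2 ⟨v, hvs, hq⟩)
        have h2 : Sum.inr q ∈ mU (N.preSet (s' : Set T₁ × Set T₂).1 ∪
            N.postSet (s' : Set T₁ × Set T₂).1) (M.preSet (s' : Set T₁ × Set T₂).2 ∪
            M.postSet (s' : Set T₁ × Set T₂).2) :=
          mem_mU_inr.2 (mem_prepostSet.2 ⟨v', hvs', hq'⟩)
        have : Sum.inr q ∈ (∅ : Set (P ⊕ Q)) := hplace ▸ Set.mem_inter h1 h2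
        exact this
    have hbUV : N.tgtSet U = M.srcSet V := by
      rw [hUdef, hVdef, tgtSet_biUnion, srcSet_biUnion]
      exact Set.iUnion_congr fun s => Set.iUnion_congr fun _ => s.prop.1.2.2
    rw [comp_preSet] at hpre
    rw [comp_postSet] at hpost
    rw [comp_preSet, comp_postSet, mU_diff_union] at heq
    rw [comp_srcSet] at hsrc
    rw [comp_tgtSet] at htgt
    obtain ⟨hpreX, hpreY⟩ := mU_subset_mU.1 hpre
    obtain ⟨hpostX, hpostY⟩ := mU_inter_mU.1 hpost
    obtain ⟨heqX, heqY⟩ := mU_eq_mU.1 heq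
    exact ⟨N.tgtSet U,
      ⟨U, hMIU, hpreX, hpostX, heqX, hsrc, rfl⟩,
      ⟨V, hMIV, hpreY, hpostY, heqY, hbUV.symm, htgt⟩⟩
  · rintro ⟨γ, ⟨U, hMIU, hpreX, hpostX, heqX, hsrcU, htgtU⟩,
      ⟨V, hMIV, hpreY, hpostY, heqY, hsrcV, htgtV⟩⟩
    have hbUV : N.tgtSet U = M.srcSet V := by rw [htgtU, hsrcV]
    obtain ⟨W, hMIW, h1, h2⟩ := sync_decomp hN hM hMIU hMIV hbUV
    refine ⟨W, hMIW, ?_, ?_, ?_, ?_, ?_⟩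
    · rw [comp_preSet, h1, h2]
      exact mU_subset_mU.2 ⟨hpreX, hpreY⟩
    · rw [comp_postSet, h1, h2]
      exact mU_inter_mU.2 ⟨hpostX, hpostY⟩
    · rw [comp_preSet, comp_postSet, h1, h2, mU_diff_union]
      exact mU_eq_mU.2 ⟨heqX, heqY⟩
    · rw [comp_srcSet, h1]; exact hsrcU
    · rw [comp_tgtSet, h2]; exact htgtV
end

section
/- Epsilon-trace decomposition: for nets N : k→l and M : l→m, if there is a trace (X ⊎ Y) (--0^k/0^m-->)^* (X' ⊎ Y') in N;M consisting only of epsilon-labelled steps, then there exist p ∈ ℕ and γ₁,…,γ_p ∈ {0,1}^l with traces X --0^k/γ₁--> X₁ --0^k/γ₂--> ⋯ --0^k/γ_p--> X' in N and Y --γ₁/0^m--> Y₁ --γ₂/0^m--> ⋯ --γ_p/0^m--> Y' in M. -/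
namespace Net

variable {P Q : Type} {T₁ T₂ : Type} {k l m : ℕ}

lemma biUnion_biUnion {ι α β : Type*} (S : Set ι) (f : ι → Set α) (g : α → Set β) :
    ⋃ t ∈ ⋃ i ∈ S, f i, g t = ⋃ i ∈ S, ⋃ t ∈ f i, g t := by
  ext x; simp only [Set.mem_iUnion, exists_prop]; tauto

set_option maxHeartbeats 1000000 in
lemma step_decomp (N : Net P T₁ k l) (M : Net Q T₂ l m) {Z Z' : Set (P ⊕ Q)}
    (h : (N.comp M).Step Z (∅ : Set (Fin k)) (∅ : Set (Fin m)) Z') :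
    ∃ γ : Set (Fin l),
      N.Step (Sum.inl ⁻¹' Z) ∅ γ (Sum.inl ⁻¹' Z') ∧
      M.Step (Sum.inr ⁻¹' Z) γ ∅ (Sum.inr ⁻¹' Z') := by
  obtain ⟨U, hMI, hpre, hpost, hZ', hsrc, htgt⟩ := h
  set U₁ : Set T₁ := ⋃ s ∈ U, (s : Set T₁ × Set T₂).1 with hU₁
  set V : Set T₂ := ⋃ s ∈ U, (s : Set T₁ × Set T₂).2 with hV
  -- decompose the composite transition-set data
  have hpreU : (N.comp M).preSet U =
      Sum.inl '' N.preSet U₁ ∪ Sum.inr '' M.preSet V := by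
    ext x
    cases x with
    | inl p => simp [hU₁, comp, preSet] <;> tauto
    | inr q => simp [hV, comp, preSet] <;> tauto
  have hpostU : (N.comp M).postSet U =
      Sum.inl '' N.postSet U₁ ∪ Sum.inr '' M.postSet V := by
    ext x
    cases x with
    | inl p => simp [hU₁, comp, postSet] <;> tauto
    | inr q => simp [hV, comp, postSet] <;> tauto
  have hsrcU : (N.comp M).srcSet U = N.srcSet U₁ := by
    rw [hU₁, srcSet, srcSet, biUnion_biUnion]; rfl
  have htgtU : (N.comp M).tgtSet U = M.tgtSet V := by
    rw [hV, tgtSet, tgtSet, biUnion_biUnion]; rfl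
  -- the middle label
  refine ⟨N.tgtSet U₁, ⟨U₁, ?_, ?_, ?_, ?_, ?_, rfl⟩, ⟨V, ?_, ?_, ?_, ?_, ?_, ?_⟩⟩
  · -- N.MI U₁
    rintro t ht t' ht' htne
    simp only [hU₁, Set.mem_iUnion, exists_prop] at ht ht'
    obtain ⟨s, hs, hts⟩ := ht
    obtain ⟨s', hs', hts'⟩ := ht'
    by_cases hss : s = s'
    · subst hss
      exact s.property.1.1 t hts t' hts' htne
    · have hd := hMI s hs s' hs' hss
      ext x
      simp only [Set.mem_inter_iff, Set.mem_union, Set.mem_empty_iff_false, iff_false,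
        not_and]
      intro hx hx'
      have hmem : (Sum.inl x : P ⊕ Q) ∈
          ((N.comp M).pre s ∪ (N.comp M).post s) ∩
          ((N.comp M).pre s' ∪ (N.comp M).post s') := by
        constructor
        · rcases hx with hx | hx
          · exact Or.inl (Or.inl ⟨x, Set.mem_biUnion hts hx, rfl⟩)
          · exact Or.inr (Or.inl ⟨x, Set.mem_biUnion hts hx, rfl⟩)
        · rcases hx' with hx' | hx'
          · exact Or.inl (Or.inl ⟨x, Set.mem_biUnion hts' hx', rfl⟩)
          · exact Or.inr (Or.inl ⟨x, Set.mem_biUnion hts' hx', rfl⟩)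
      rw [hd] at hmem
      exact hmem
  · -- N.preSet U₁ ⊆ inl⁻¹ Z
    intro p hp
    have hm : (Sum.inl p : P ⊕ Q) ∈ (N.comp M).preSet U := by
      rw [hpreU]; exact Or.inl ⟨p, hp, rfl⟩
    exact hpre hm
  · -- postSet ∩ = ∅
    ext p
    simp only [Set.mem_inter_iff, Set.mem_empty_iff_false, iff_false, not_and,
      Set.mem_preimage]
    intro hp hz
    have hm : (Sum.inl p : P ⊕ Q) ∈ (N.comp M).postSet U := by
      rw [hpostU]; exact Or.inl ⟨p, hp, rfl⟩
    have : (Sum.inl p : P ⊕ Q) ∈ (N.comp M).postSet U ∩ Z := ⟨hm, hz⟩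
    rw [hpost] at this
    exact this
  · -- marking equation
    rw [hZ', hpreU, hpostU]
    ext p
    simp only [Set.mem_preimage, Set.mem_union, Set.mem_diff, Set.mem_image]
    constructor
    · rintro (⟨hz, hn⟩ | (⟨p', hp', hpp⟩ | ⟨q, hq, hqq⟩))
      · refine Or.inl ⟨hz, fun hp => hn (Or.inl ⟨p, hp, rfl⟩)⟩
      · exact Or.inr ((Sum.inl.injEq _ _ ▸ hpp : p' = p) ▸ hp')
      · exact absurd hqq (by simp)
    · rintro (⟨hz, hn⟩ | hp)
      · refine Or.inl ⟨hz, ?_⟩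
        rintro (⟨p', hp', hpp⟩ | ⟨q, hq, hqq⟩)
        · exact hn ((Sum.inl.injEq _ _ ▸ hpp : p' = p) ▸ hp')
        · exact absurd hqq (by simp)
      · exact Or.inr (Or.inl ⟨p, hp, rfl⟩)
  · -- src = ∅
    rw [← hsrcU, hsrc]
  · -- M.MI V
    rintro t ht t' ht' htne
    simp only [hV, Set.mem_iUnion, exists_prop] at ht ht'
    obtain ⟨s, hs, hts⟩ := ht
    obtain ⟨s', hs', hts'⟩ := ht'
    by_cases hss : s = s'
    · subst hss
      exact s.property.1.2.1 t hts t' hts' htne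
    · have hd := hMI s hs s' hs' hss
      ext x
      simp only [Set.mem_inter_iff, Set.mem_union, Set.mem_empty_iff_false, iff_false,
        not_and]
      intro hx hx'
      have hmem : (Sum.inr x : P ⊕ Q) ∈
          ((N.comp M).pre s ∪ (N.comp M).post s) ∩
          ((N.comp M).pre s' ∪ (N.comp M).post s') := by
        constructor
        · rcases hx with hx | hx
          · exact Or.inl (Or.inr ⟨x, Set.mem_biUnion hts hx, rfl⟩)
          · exact Or.inr (Or.inr ⟨x, Set.mem_biUnion hts hx, rfl⟩)
        · rcases hx' with hx' | hx'
          · exact Or.inl (Or.inr ⟨x, Set.mem_biUnion hts' hx', rfl⟩)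
          · exact Or.inr (Or.inr ⟨x, Set.mem_biUnion hts' hx', rfl⟩)
      rw [hd] at hmem
      exact hmem
  · -- M.preSet V ⊆ inr⁻¹ Z
    intro q hq
    have hm : (Sum.inr q : P ⊕ Q) ∈ (N.comp M).preSet U := by
      rw [hpreU]; exact Or.inr ⟨q, hq, rfl⟩
    exact hpre hm
  · ext q
    simp only [Set.mem_inter_iff, Set.mem_empty_iff_false, iff_false, not_and,
      Set.mem_preimage]
    intro hq hz
    have hm : (Sum.inr q : P ⊕ Q) ∈ (N.comp M).postSet U := by
      rw [hpostU]; exact Or.inr ⟨q, hq, rfl⟩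
    have : (Sum.inr q : P ⊕ Q) ∈ (N.comp M).postSet U ∩ Z := ⟨hm, hz⟩
    rw [hpost] at this
    exact this
  · rw [hZ', hpreU, hpostU]
    ext q
    simp only [Set.mem_preimage, Set.mem_union, Set.mem_diff, Set.mem_image]
    constructor
    · rintro (⟨hz, hn⟩ | (⟨p, hp, hpp⟩ | ⟨q', hq', hqq⟩))
      · refine Or.inl ⟨hz, fun hq => hn (Or.inr ⟨q, hq, rfl⟩)⟩
      · exact absurd hpp (by simp)
      · exact Or.inr ((Sum.inr.injEq _ _ ▸ hqq : q' = q) ▸ hq')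
    · rintro (⟨hz, hn⟩ | hq)
      · refine Or.inl ⟨hz, ?_⟩
        rintro (⟨p, hp, hpp⟩ | ⟨q', hq', hqq⟩)
        · exact absurd hpp (by simp)
        · exact hn ((Sum.inr.injEq _ _ ▸ hqq : q' = q) ▸ hq')
      · exact Or.inr (Or.inr ⟨q, hq, rfl⟩)
  · -- M.srcSet V = N.tgtSet U₁
    rw [hU₁, hV, srcSet, tgtSet, biUnion_biUnion, biUnion_biUnion]
    exact (Set.iUnion₂_congr fun s hs => s.property.1.2.2).symm
  · rw [← htgtU, htgt]

lemma eps_trace_aux (N : Net P T₁ k l) (M : Net Q T₂ l m) {Z Z' : Set (P ⊕ Q)}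
    (h : Relation.ReflTransGen (N.comp M).EpsStep Z Z') :
    ∃ γs : List (Set (Fin l)),
      N.Trace (Sum.inl ⁻¹' Z) (γs.map fun γ => ((∅ : Set (Fin k)), γ)) (Sum.inl ⁻¹' Z') ∧
      M.Trace (Sum.inr ⁻¹' Z) (γs.map fun γ => (γ, (∅ : Set (Fin m)))) (Sum.inr ⁻¹' Z') := by
  induction h using Relation.ReflTransGen.head_induction_on with
  | refl => exact ⟨[], rfl, rfl⟩
  | head hstep _ ih =>
    obtain ⟨γ, hNst, hMst⟩ := step_decomp N M hstep
    obtain ⟨γs, hNt, hMt⟩ := ih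
    exact ⟨γ :: γs, ⟨_, hNst, hNt⟩, ⟨_, hMst, hMt⟩⟩

lemma inl_preimage_mU (X : Set P) (Y : Set Q) : Sum.inl ⁻¹' mU X Y = X := by
  ext p; simp [mU]

lemma inr_preimage_mU (X : Set P) (Y : Set Q) : Sum.inr ⁻¹' mU X Y = Y := by
  ext q; simp [mU]

end Net

open Net in
/-- an epsilon trace of `N ; M` decomposes into component traces
whose labels agree on the common boundary. -/
theorem eps_trace_decomposition {P Q T₁ T₂ : Type} {k l m : ℕ}
    (N : Net P T₁ k l) (M : Net Q T₂ l m)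
    (hN : N.BoundaryInj) (hM : M.BoundaryInj)
    (X X' : Set P) (Y Y' : Set Q)
    (h : Relation.ReflTransGen (N.comp M).EpsStep (mU X Y) (mU X' Y')) :
    ∃ γs : List (Set (Fin l)),
      N.Trace X (γs.map fun γ => ((∅ : Set (Fin k)), γ)) X' ∧
      M.Trace Y (γs.map fun γ => (γ, (∅ : Set (Fin m)))) Y' := by
  have := eps_trace_aux N M h
  rwa [inl_preimage_mU, inr_preimage_mU, inl_preimage_mU, inr_preimage_mU] at this
end

section
/- The NFA translation is functorial on composition: for nets N : k→l and M : l→m with initial markings 𝒳 ⊆ 2^{P_N}, 𝒳' ⊆ 2^{P_M} and final markings 𝒴 ⊆ 2^{P_N}, 𝒴' ⊆ 2^{P_M}, the NFA of the composite net, NFA(N;M, 𝒳 ⊎ 𝒳', 𝒴 ⊎ 𝒴'), is isomorphic to the composition of the component NFAs, NFA(N, 𝒳, 𝒴) ; NFA(M, 𝒳', 𝒴'). -/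
namespace NetNFAAux

open Net

variable {P Q T₁ T₂ : Type} {k l m : ℕ}

lemma mi_mono (N : Net P T₁ k l) {U V : Set T₁} (h : U ⊆ V) (hV : N.MI V) : N.MI U :=
  fun t ht t' ht' hne => hV t (h ht) t' (h ht') hne

lemma rtg_symm {α : Type*} {R : α → α → Prop} (hs : ∀ a b, R a b → R b a) {a b : α}
    (h : Relation.ReflTransGen R a b) : Relation.ReflTransGen R b a := by
  induction h with
  | refl => exact .refl
  | tail _ h₂ ih => exact .trans (.single (hs _ _ h₂)) ih

section Back

variable (N : Net P T₁ k l) (M : Net Q T₂ l m) (U₁ : Set T₁) (U₂ : Set T₂)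

/-- The connection relation between component transitions sharing a middle boundary port. -/
def Rel (x y : T₁ ⊕ T₂) : Prop :=
  ∃ t v, t ∈ U₁ ∧ v ∈ U₂ ∧ (N.tgt t ∩ M.src v).Nonempty ∧
    ((x = .inl t ∧ y = .inr v) ∨ (x = .inr v ∧ y = .inl t))

lemma rel_symm : ∀ a b, Rel N M U₁ U₂ a b → Rel N M U₁ U₂ b a := by
  rintro a b ⟨t, v, ht, hv, hn, (⟨rfl, rfl⟩ | ⟨rfl, rfl⟩)⟩
  · exact ⟨t, v, ht, hv, hn, Or.inr ⟨rfl, rfl⟩⟩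
  · exact ⟨t, v, ht, hv, hn, Or.inl ⟨rfl, rfl⟩⟩

/-- Membership predicate. -/
def InU : T₁ ⊕ T₂ → Prop := Sum.elim (· ∈ U₁) (· ∈ U₂)

abbrev Reach (x y : T₁ ⊕ T₂) : Prop := Relation.ReflTransGen (Rel N M U₁ U₂) x y

lemma inU_of_rel {x y : T₁ ⊕ T₂} (h : Rel N M U₁ U₂ x y) : InU U₁ U₂ y := by
  obtain ⟨t, v, ht, hv, _, (⟨rfl, rfl⟩ | ⟨rfl, rfl⟩)⟩ := h
  · exact hv
  · exact ht

lemma inU_of_reach {x y : T₁ ⊕ T₂} (hx : InU U₁ U₂ x) (h : Reach N M U₁ U₂ x y) :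
    InU U₁ U₂ y := by
  induction h with
  | refl => exact hx
  | tail _ h₂ _ => exact inU_of_rel N M U₁ U₂ h₂

/-- Connected component: the `T₁`-part. -/
def c₁ (x : T₁ ⊕ T₂) : Set T₁ := {t | Reach N M U₁ U₂ x (Sum.inl t)}
/-- Connected component: the `T₂`-part. -/
def c₂ (x : T₁ ⊕ T₂) : Set T₂ := {v | Reach N M U₁ U₂ x (Sum.inr v)}

lemma c₁_subset {x : T₁ ⊕ T₂} (hx : InU U₁ U₂ x) : c₁ N M U₁ U₂ x ⊆ U₁ := by
  intro t ht; exact inU_of_reach N M U₁ U₂ hx ht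

lemma c₂_subset {x : T₁ ⊕ T₂} (hx : InU U₁ U₂ x) : c₂ N M U₁ U₂ x ⊆ U₂ := by
  intro v hv; exact inU_of_reach N M U₁ U₂ hx hv

lemma c₁_eq_of_reach {x y : T₁ ⊕ T₂} (h : Reach N M U₁ U₂ x y) :
    c₁ N M U₁ U₂ x = c₁ N M U₁ U₂ y := by
  ext t
  exact ⟨fun ht => .trans (rtg_symm (rel_symm N M U₁ U₂) h) ht, fun ht => .trans h ht⟩

lemma c₂_eq_of_reach {x y : T₁ ⊕ T₂} (h : Reach N M U₁ U₂ x y) :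
    c₂ N M U₁ U₂ x = c₂ N M U₁ U₂ y := by
  ext v
  exact ⟨fun hv => .trans (rtg_symm (rel_symm N M U₁ U₂) h) hv, fun hv => .trans h hv⟩

/-- The component of any transition is a balanced on the middle boundary. -/
lemma tgt_c₁_eq_src_c₂ (hbal : N.tgtSet U₁ = M.srcSet U₂) {x : T₁ ⊕ T₂}
    (hx : InU U₁ U₂ x) :
    N.tgtSet (c₁ N M U₁ U₂ x) = M.srcSet (c₂ N M U₁ U₂ x) := by
  ext i
  simp only [Net.tgtSet, Net.srcSet, Set.mem_iUnion, exists_prop]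
  constructor
  · rintro ⟨t, ht, hi⟩
    have htU : t ∈ U₁ := c₁_subset N M U₁ U₂ hx ht
    have hmem : i ∈ M.srcSet U₂ := by
      rw [← hbal]; exact Set.mem_biUnion htU hi
    rcases Set.mem_iUnion₂.1 hmem with ⟨v, hv, hiv⟩
    exact ⟨v, Relation.ReflTransGen.tail ht
      ⟨t, v, htU, hv, ⟨i, hi, hiv⟩, Or.inl ⟨rfl, rfl⟩⟩, hiv⟩
  · rintro ⟨v, hv, hi⟩
    have hvU : v ∈ U₂ := c₂_subset N M U₁ U₂ hx hv
    have hmem : i ∈ N.tgtSet U₁ := by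
      rw [hbal]; exact Set.mem_biUnion hvU hi
    rcases Set.mem_iUnion₂.1 hmem with ⟨t, ht, hit⟩
    exact ⟨t, Relation.ReflTransGen.tail hv
      ⟨t, v, ht, hvU, ⟨i, hit, hi⟩, Or.inr ⟨rfl, rfl⟩⟩, hit⟩

/-- Components are minimal synchronisations. -/
lemma minSync_c (hN : N.BoundaryInj) (hM : M.BoundaryInj)
    (h₁ : N.MI U₁) (h₂ : M.MI U₂) (hbal : N.tgtSet U₁ = M.srcSet U₂)
    (x : T₁ ⊕ T₂) (hx : InU U₁ U₂ x) :
    MinSync N M (c₁ N M U₁ U₂ x) (c₂ N M U₁ U₂ x) := by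
  refine ⟨⟨mi_mono N (c₁_subset N M U₁ U₂ hx) h₁, mi_mono M (c₂_subset N M U₁ U₂ hx) h₂,
      tgt_c₁_eq_src_c₂ N M U₁ U₂ hbal hx⟩, ?_, ?_⟩
  · rintro ⟨he₁, he₂⟩
    rcases x with t | v
    · exact absurd he₁ (Set.nonempty_iff_ne_empty.1 ⟨t, Relation.ReflTransGen.refl⟩)
    · exact absurd he₂ (Set.nonempty_iff_ne_empty.1 ⟨v, Relation.ReflTransGen.refl⟩)
  · intro U' V' hU' hV' hsync
    by_cases hemp : U' = ∅ ∧ V' = ∅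
    · exact Or.inl hemp
    right
    obtain ⟨_, _, heq⟩ := hsync
    have hclosed : ∀ y z, Sum.elim (· ∈ U') (· ∈ V') y → Rel N M U₁ U₂ y z →
        Sum.elim (· ∈ U') (· ∈ V') z := by
      rintro y z hy ⟨t, v, htU, hvU, ⟨i, hit, hiv⟩, (⟨rfl, rfl⟩ | ⟨rfl, rfl⟩)⟩
      · -- y = inl t ∈ U', z = inr v
        have hy' : t ∈ U' := hy
        have hmem : i ∈ M.srcSet V' := by
          rw [← heq]; exact Set.mem_biUnion hy' hit
        rcases Set.mem_iUnion₂.1 hmem with ⟨v'', hv'', hiv''⟩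
        by_cases hvv : v = v''
        · subst hvv; exact hv''
        · exact absurd (Set.eq_empty_iff_forall_notMem.1 (hM v v'' hvv).1 i ⟨hiv, hiv''⟩)
            not_false
      · -- y = inr v ∈ V', z = inl t
        have hy' : v ∈ V' := hy
        have hmem : i ∈ N.tgtSet U' := by
          rw [heq]; exact Set.mem_biUnion hy' hiv
        rcases Set.mem_iUnion₂.1 hmem with ⟨t'', ht'', hit''⟩
        by_cases htt : t = t''
        · subst htt; exact ht''
        · exact absurd (Set.eq_empty_iff_forall_notMem.1 (hN t t'' htt).2 i ⟨hit, hit''⟩)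
            not_false
    have hclosed' : ∀ {y z}, Sum.elim (· ∈ U') (· ∈ V') y → Reach N M U₁ U₂ y z →
        Sum.elim (· ∈ U') (· ∈ V') z := by
      intro y z hy h
      induction h with
      | refl => exact hy
      | tail _ h₂ ih => exact hclosed _ _ ih h₂
    obtain ⟨y₀, hy₀, hxy₀⟩ : ∃ y₀, Sum.elim (· ∈ U') (· ∈ V') y₀ ∧ Reach N M U₁ U₂ x y₀ := by
      rcases not_and_or.1 hemp with h | h
      · obtain ⟨t₀, ht₀⟩ := Set.nonempty_iff_ne_empty.2 h
        exact ⟨Sum.inl t₀, ht₀, hU' ht₀⟩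
      · obtain ⟨v₀, hv₀⟩ := Set.nonempty_iff_ne_empty.2 h
        exact ⟨Sum.inr v₀, hv₀, hV' hv₀⟩
    have hall : ∀ z, Reach N M U₁ U₂ x z → Sum.elim (· ∈ U') (· ∈ V') z := fun z hz =>
      hclosed' hy₀ (.trans (rtg_symm (rel_symm N M U₁ U₂) hxy₀) hz)
    exact ⟨Set.Subset.antisymm hU' (fun t ht => hall (Sum.inl t) ht),
      Set.Subset.antisymm hV' (fun v hv => hall (Sum.inr v) hv)⟩

end Back

end NetNFAAux
namespace NetNFAAux

open Net

variable {P Q T₁ T₂ : Type} {k l m : ℕ}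

@[simp] lemma inl_mem_lr {A : Set P} {B : Set Q} {p : P} :
    Sum.inl p ∈ Sum.inl '' A ∪ Sum.inr '' B ↔ p ∈ A := by simp

@[simp] lemma inr_mem_lr {A : Set P} {B : Set Q} {q : Q} :
    Sum.inr q ∈ Sum.inl '' A ∪ Sum.inr '' B ↔ q ∈ B := by simp

lemma biUnion_biUnion {ι α β : Type*} (U : Set ι) (f : ι → Set α) (g : α → Set β) :
    ⋃ t ∈ ⋃ s ∈ U, f s, g t = ⋃ s ∈ U, ⋃ t ∈ f s, g t := by
  ext x; simp only [Set.mem_iUnion, exists_prop]; tauto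

/-- Backward direction of compositionality: component steps give a composite step. -/
lemma comp_step_of_steps (N : Net P T₁ k l) (M : Net Q T₂ l m)
    (hN : N.BoundaryInj) (hM : M.BoundaryInj)
    {Z Z' : Set (P ⊕ Q)} {α : Set (Fin k)} {γ : Set (Fin l)} {β : Set (Fin m)}
    (h1 : N.Step (Sum.inl ⁻¹' Z) α γ (Sum.inl ⁻¹' Z'))
    (h2 : M.Step (Sum.inr ⁻¹' Z) γ β (Sum.inr ⁻¹' Z')) :
    (N.comp M).Step Z α β Z' := by
  obtain ⟨U₁, hMI₁, hpre₁, hpost₁, hZ'₁, hsrc₁, htgt₁⟩ := h1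
  obtain ⟨U₂, hMI₂, hpre₂, hpost₂, hZ'₂, hsrc₂, htgt₂⟩ := h2
  have hbal : N.tgtSet U₁ = M.srcSet U₂ := htgt₁.trans hsrc₂.symm
  set Us : Set {s : Set T₁ × Set T₂ // MinSync N M s.1 s.2} :=
    {s | ∃ x, InU U₁ U₂ x ∧ (s : Set T₁ × Set T₂) = (c₁ N M U₁ U₂ x, c₂ N M U₁ U₂ x)}
    with hUsdef
  have hc1 : ∀ s ∈ Us, (s : Set T₁ × Set T₂).1 ⊆ U₁ := by
    rintro s ⟨x, hx, hs⟩; rw [hs]; exact c₁_subset N M U₁ U₂ hx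
  have hc2 : ∀ s ∈ Us, (s : Set T₁ × Set T₂).2 ⊆ U₂ := by
    rintro s ⟨x, hx, hs⟩; rw [hs]; exact c₂_subset N M U₁ U₂ hx
  have hmemU1 : ∀ t ∈ U₁, ∃ s ∈ Us, t ∈ (s : Set T₁ × Set T₂).1 := by
    intro t ht
    exact ⟨⟨(c₁ N M U₁ U₂ (.inl t), c₂ N M U₁ U₂ (.inl t)),
      minSync_c N M U₁ U₂ hN hM hMI₁ hMI₂ hbal _ ht⟩, ⟨.inl t, ht, rfl⟩,
      Relation.ReflTransGen.refl⟩
  have hmemU2 : ∀ v ∈ U₂, ∃ s ∈ Us, v ∈ (s : Set T₁ × Set T₂).2 := by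
    intro v hv
    exact ⟨⟨(c₁ N M U₁ U₂ (.inr v), c₂ N M U₁ U₂ (.inr v)),
      minSync_c N M U₁ U₂ hN hM hMI₁ hMI₂ hbal _ hv⟩, ⟨.inr v, hv, rfl⟩,
      Relation.ReflTransGen.refl⟩
  have hdis : ∀ s ∈ Us, ∀ s' ∈ Us, s ≠ s' →
      (s : Set T₁ × Set T₂).1 ∩ (s' : Set T₁ × Set T₂).1 = ∅ ∧
      (s : Set T₁ × Set T₂).2 ∩ (s' : Set T₁ × Set T₂).2 = ∅ := by
    rintro s ⟨x, hx, hs⟩ s' ⟨x', hx', hs'⟩ hne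
    have key : ∀ (h : Reach N M U₁ U₂ x x'), False := by
      intro h
      apply hne
      apply Subtype.ext
      rw [hs, hs', c₁_eq_of_reach N M U₁ U₂ h, c₂_eq_of_reach N M U₁ U₂ h]
    constructor
    · ext t; simp only [Set.mem_inter_iff, Set.mem_empty_iff_false, iff_false, not_and]
      intro h1 h2
      rw [hs] at h1; rw [hs'] at h2
      exact key (.trans h1 (rtg_symm (rel_symm N M U₁ U₂) h2))
    · ext v; simp only [Set.mem_inter_iff, Set.mem_empty_iff_false, iff_false, not_and]
      intro h1 h2
      rw [hs] at h1; rw [hs'] at h2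
      exact key (.trans h1 (rtg_symm (rel_symm N M U₁ U₂) h2))
  have hU1 : (⋃ s ∈ Us, (s : Set T₁ × Set T₂).1) = U₁ := by
    apply Set.Subset.antisymm
    · exact Set.iUnion₂_subset hc1
    · intro t ht; obtain ⟨s, hs, hts⟩ := hmemU1 t ht; exact Set.mem_biUnion hs hts
  have hU2 : (⋃ s ∈ Us, (s : Set T₁ × Set T₂).2) = U₂ := by
    apply Set.Subset.antisymm
    · exact Set.iUnion₂_subset hc2
    · intro v hv; obtain ⟨s, hs, hvs⟩ := hmemU2 v hv; exact Set.mem_biUnion hs hvs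
  have hpreU : (N.comp M).preSet Us = Sum.inl '' N.preSet U₁ ∪ Sum.inr '' M.preSet U₂ := by
    rw [← hU1, ← hU2]
    ext w
    rcases w with p | q <;>
      simp only [Net.preSet, Net.comp, Set.mem_iUnion, exists_prop, Set.mem_union,
        Set.mem_image, Sum.inl.injEq, Sum.inr.injEq, exists_eq_right,
        reduceCtorEq, exists_false, or_false, false_or, and_false, false_and] <;>
      tauto
  have hpostU : (N.comp M).postSet Us = Sum.inl '' N.postSet U₁ ∪ Sum.inr '' M.postSet U₂ := by
    rw [← hU1, ← hU2]
    ext w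
    rcases w with p | q <;>
      simp only [Net.postSet, Net.comp, Set.mem_iUnion, exists_prop, Set.mem_union,
        Set.mem_image, Sum.inl.injEq, Sum.inr.injEq, exists_eq_right,
        reduceCtorEq, exists_false, or_false, false_or, and_false, false_and] <;>
      tauto
  have hsrcU : (N.comp M).srcSet Us = N.srcSet U₁ := by
    rw [← hU1]
    ext i
    simp only [Net.srcSet, Net.comp, Set.mem_iUnion, exists_prop]
    tauto
  have htgtU : (N.comp M).tgtSet Us = M.tgtSet U₂ := by
    rw [← hU2]
    ext i
    simp only [Net.tgtSet, Net.comp, Set.mem_iUnion, exists_prop]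
    tauto
  refine ⟨Us, ?_, ?_, ?_, ?_, ?_, ?_⟩
  · -- MI of the composite transitions
    intro s hs s' hs' hne
    obtain ⟨hd1, hd2⟩ := hdis s hs s' hs' hne
    ext w
    simp only [Set.mem_inter_iff, Set.mem_empty_iff_false, iff_false, not_and]
    intro hw hw'
    rcases w with p | q
    · simp only [Net.comp, Set.mem_union, Set.mem_image, Sum.inl.injEq, exists_eq_right,
        reduceCtorEq, and_false, exists_false, false_or, or_false] at hw hw'
      have e1 : ∃ t ∈ (s : Set T₁ × Set T₂).1, p ∈ N.pre t ∪ N.post t := by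
        rcases hw with h | h <;> rcases Set.mem_iUnion₂.1 h with ⟨t, ht, hp⟩
        · exact ⟨t, ht, Or.inl hp⟩
        · exact ⟨t, ht, Or.inr hp⟩
      have e2 : ∃ t ∈ (s' : Set T₁ × Set T₂).1, p ∈ N.pre t ∪ N.post t := by
        rcases hw' with h | h <;> rcases Set.mem_iUnion₂.1 h with ⟨t, ht, hp⟩
        · exact ⟨t, ht, Or.inl hp⟩
        · exact ⟨t, ht, Or.inr hp⟩
      obtain ⟨t, ht, hp⟩ := e1
      obtain ⟨t', ht', hp'⟩ := e2
      have htne : t ≠ t' := by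
        rintro rfl
        exact absurd (Set.eq_empty_iff_forall_notMem.1 hd1 t ⟨ht, ht'⟩) not_false
      exact absurd (Set.eq_empty_iff_forall_notMem.1
        (hMI₁ t (hc1 s hs ht) t' (hc1 s' hs' ht') htne) p ⟨hp, hp'⟩) not_false
    · simp only [Net.comp, Set.mem_union, Set.mem_image, Sum.inr.injEq, exists_eq_right,
        reduceCtorEq, and_false, exists_false, false_or, or_false] at hw hw'
      have e1 : ∃ v ∈ (s : Set T₁ × Set T₂).2, q ∈ M.pre v ∪ M.post v := by
        rcases hw with h | h <;> rcases Set.mem_iUnion₂.1 h with ⟨v, hv, hq⟩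
        · exact ⟨v, hv, Or.inl hq⟩
        · exact ⟨v, hv, Or.inr hq⟩
      have e2 : ∃ v ∈ (s' : Set T₁ × Set T₂).2, q ∈ M.pre v ∪ M.post v := by
        rcases hw' with h | h <;> rcases Set.mem_iUnion₂.1 h with ⟨v, hv, hq⟩
        · exact ⟨v, hv, Or.inl hq⟩
        · exact ⟨v, hv, Or.inr hq⟩
      obtain ⟨v, hv, hq⟩ := e1
      obtain ⟨v', hv', hq'⟩ := e2
      have hvne : v ≠ v' := by
        rintro rfl
        exact absurd (Set.eq_empty_iff_forall_notMem.1 hd2 v ⟨hv, hv'⟩) not_false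
      exact absurd (Set.eq_empty_iff_forall_notMem.1
        (hMI₂ v (hc2 s hs hv) v' (hc2 s' hs' hv') hvne) q ⟨hq, hq'⟩) not_false
  · rw [hpreU]
    rintro w (⟨p, hp, rfl⟩ | ⟨q, hq, rfl⟩)
    · exact hpre₁ hp
    · exact hpre₂ hq
  · rw [hpostU]
    ext w
    simp only [Set.mem_inter_iff, Set.mem_empty_iff_false, iff_false, not_and]
    rintro (⟨p, hp, rfl⟩ | ⟨q, hq, rfl⟩) hz
    · exact absurd (Set.eq_empty_iff_forall_notMem.1 hpost₁ p ⟨hp, hz⟩) not_false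
    · exact absurd (Set.eq_empty_iff_forall_notMem.1 hpost₂ q ⟨hq, hz⟩) not_false
  · rw [hpreU, hpostU]
    ext w
    rcases w with p | q
    · have hh := Set.ext_iff.1 hZ'₁ p
      simp only [Set.mem_preimage, Set.mem_union, Set.mem_diff] at hh
      simp only [Set.mem_union, Set.mem_diff, Set.mem_image, Sum.inl.injEq, Sum.inr.injEq,
        exists_eq_right, reduceCtorEq, and_false, exists_false, or_false, false_or]
      tauto
    · have hh := Set.ext_iff.1 hZ'₂ q
      simp only [Set.mem_preimage, Set.mem_union, Set.mem_diff] at hh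
      simp only [Set.mem_union, Set.mem_diff, Set.mem_image, Sum.inl.injEq, Sum.inr.injEq,
        exists_eq_right, reduceCtorEq, and_false, exists_false, or_false, false_or]
      tauto
  · rw [hsrcU]; exact hsrc₁
  · rw [htgtU]; exact htgt₂

end NetNFAAux
namespace NetNFAAux

open Net

variable {P Q T₁ T₂ : Type} {k l m : ℕ}

lemma comp_preSet (N : Net P T₁ k l) (M : Net Q T₂ l m)
    (U : Set {s : Set T₁ × Set T₂ // MinSync N M s.1 s.2}) :
    (N.comp M).preSet U = Sum.inl '' N.preSet (⋃ s ∈ U, (s : Set T₁ × Set T₂).1) ∪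
      Sum.inr '' M.preSet (⋃ s ∈ U, (s : Set T₁ × Set T₂).2) := by
  ext w
  rcases w with p | q <;>
    simp only [Net.preSet, Net.comp, Set.mem_iUnion, exists_prop, Set.mem_union,
      Set.mem_image, Sum.inl.injEq, Sum.inr.injEq, exists_eq_right,
      reduceCtorEq, exists_false, or_false, false_or, and_false, false_and] <;>
    tauto

lemma comp_postSet (N : Net P T₁ k l) (M : Net Q T₂ l m)
    (U : Set {s : Set T₁ × Set T₂ // MinSync N M s.1 s.2}) :
    (N.comp M).postSet U = Sum.inl '' N.postSet (⋃ s ∈ U, (s : Set T₁ × Set T₂).1) ∪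
      Sum.inr '' M.postSet (⋃ s ∈ U, (s : Set T₁ × Set T₂).2) := by
  ext w
  rcases w with p | q <;>
    simp only [Net.postSet, Net.comp, Set.mem_iUnion, exists_prop, Set.mem_union,
      Set.mem_image, Sum.inl.injEq, Sum.inr.injEq, exists_eq_right,
      reduceCtorEq, exists_false, or_false, false_or, and_false, false_and] <;>
    tauto

lemma comp_srcSet (N : Net P T₁ k l) (M : Net Q T₂ l m)
    (U : Set {s : Set T₁ × Set T₂ // MinSync N M s.1 s.2}) :
    (N.comp M).srcSet U = N.srcSet (⋃ s ∈ U, (s : Set T₁ × Set T₂).1) := by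
  ext i
  simp only [Net.srcSet, Net.comp, Set.mem_iUnion, exists_prop]
  tauto

lemma comp_tgtSet (N : Net P T₁ k l) (M : Net Q T₂ l m)
    (U : Set {s : Set T₁ × Set T₂ // MinSync N M s.1 s.2}) :
    (N.comp M).tgtSet U = M.tgtSet (⋃ s ∈ U, (s : Set T₁ × Set T₂).2) := by
  ext i
  simp only [Net.tgtSet, Net.comp, Set.mem_iUnion, exists_prop]
  tauto

/-- Forward direction of compositionality. -/
lemma steps_of_comp_step (N : Net P T₁ k l) (M : Net Q T₂ l m)
    {Z Z' : Set (P ⊕ Q)} {α : Set (Fin k)} {β : Set (Fin m)}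
    (h : (N.comp M).Step Z α β Z') :
    ∃ γ, N.Step (Sum.inl ⁻¹' Z) α γ (Sum.inl ⁻¹' Z') ∧
      M.Step (Sum.inr ⁻¹' Z) γ β (Sum.inr ⁻¹' Z') := by
  obtain ⟨U, hMI, hpre, hpost, hZ', hsrc, htgt⟩ := h
  set U₁ : Set T₁ := ⋃ s ∈ U, (s : Set T₁ × Set T₂).1 with hU₁def
  set U₂ : Set T₂ := ⋃ s ∈ U, (s : Set T₁ × Set T₂).2 with hU₂def
  have hpre' := comp_preSet N M U
  have hpost' := comp_postSet N M U
  have hMI₁ : N.MI U₁ := by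
    intro t ht t' ht' hne
    rcases Set.mem_iUnion₂.1 ht with ⟨s, hs, hts⟩
    rcases Set.mem_iUnion₂.1 ht' with ⟨s', hs', hts'⟩
    by_cases hss : s = s'
    · subst hss
      exact s.2.1.1 t hts t' hts' hne
    · have hd := hMI s hs s' hs' hss
      ext p
      simp only [Set.mem_inter_iff, Set.mem_empty_iff_false, iff_false, not_and]
      intro hp hp'
      have m1 : Sum.inl p ∈ (N.comp M).pre s ∪ (N.comp M).post s := by
        rcases hp with hp | hp
        · exact Or.inl (Or.inl ⟨p, Set.mem_biUnion hts hp, rfl⟩)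
        · exact Or.inr (Or.inl ⟨p, Set.mem_biUnion hts hp, rfl⟩)
      have m2 : Sum.inl p ∈ (N.comp M).pre s' ∪ (N.comp M).post s' := by
        rcases hp' with hp' | hp'
        · exact Or.inl (Or.inl ⟨p, Set.mem_biUnion hts' hp', rfl⟩)
        · exact Or.inr (Or.inl ⟨p, Set.mem_biUnion hts' hp', rfl⟩)
      exact absurd (Set.eq_empty_iff_forall_notMem.1 hd (Sum.inl p) ⟨m1, m2⟩) not_false
  have hMI₂ : M.MI U₂ := by
    intro v hv v' hv' hne
    rcases Set.mem_iUnion₂.1 hv with ⟨s, hs, hvs⟩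
    rcases Set.mem_iUnion₂.1 hv' with ⟨s', hs', hvs'⟩
    by_cases hss : s = s'
    · subst hss
      exact s.2.1.2.1 v hvs v' hvs' hne
    · have hd := hMI s hs s' hs' hss
      ext q
      simp only [Set.mem_inter_iff, Set.mem_empty_iff_false, iff_false, not_and]
      intro hq hq'
      have m1 : Sum.inr q ∈ (N.comp M).pre s ∪ (N.comp M).post s := by
        rcases hq with hq | hq
        · exact Or.inl (Or.inr ⟨q, Set.mem_biUnion hvs hq, rfl⟩)
        · exact Or.inr (Or.inr ⟨q, Set.mem_biUnion hvs hq, rfl⟩)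
      have m2 : Sum.inr q ∈ (N.comp M).pre s' ∪ (N.comp M).post s' := by
        rcases hq' with hq' | hq'
        · exact Or.inl (Or.inr ⟨q, Set.mem_biUnion hvs' hq', rfl⟩)
        · exact Or.inr (Or.inr ⟨q, Set.mem_biUnion hvs' hq', rfl⟩)
      exact absurd (Set.eq_empty_iff_forall_notMem.1 hd (Sum.inr q) ⟨m1, m2⟩) not_false
  have hbal : M.srcSet U₂ = N.tgtSet U₁ := by
    ext i
    simp only [Net.srcSet, Net.tgtSet, hU₁def, hU₂def, Set.mem_iUnion, exists_prop]
    constructor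
    · rintro ⟨v, ⟨s, hs, hvs⟩, hi⟩
      have : i ∈ N.tgtSet (s : Set T₁ × Set T₂).1 := by
        rw [s.2.1.2.2]; exact Set.mem_biUnion hvs hi
      rcases Set.mem_iUnion₂.1 this with ⟨t, hts, hit⟩
      exact ⟨t, ⟨s, hs, hts⟩, hit⟩
    · rintro ⟨t, ⟨s, hs, hts⟩, hi⟩
      have : i ∈ M.srcSet (s : Set T₁ × Set T₂).2 := by
        rw [← s.2.1.2.2]; exact Set.mem_biUnion hts hi
      rcases Set.mem_iUnion₂.1 this with ⟨v, hvs, hiv⟩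
      exact ⟨v, ⟨s, hs, hvs⟩, hiv⟩
  refine ⟨N.tgtSet U₁, ⟨U₁, hMI₁, ?_, ?_, ?_, ?_, rfl⟩, ⟨U₂, hMI₂, ?_, ?_, ?_, hbal, ?_⟩⟩
  · -- N pre ⊆
    intro p hp
    exact hpre (hpre' ▸ Or.inl ⟨p, hp, rfl⟩)
  · -- N post disjoint
    ext p
    simp only [Set.mem_inter_iff, Set.mem_empty_iff_false, iff_false, not_and]
    intro hp hz
    have : Sum.inl p ∈ (N.comp M).postSet U := hpost' ▸ Or.inl ⟨p, hp, rfl⟩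
    exact absurd (Set.eq_empty_iff_forall_notMem.1 hpost (Sum.inl p) ⟨this, hz⟩) not_false
  · -- N marking equation
    ext p
    have hh := Set.ext_iff.1 hZ' (Sum.inl p)
    rw [hpre', hpost'] at hh
    simp only [Set.mem_union, Set.mem_diff, Set.mem_image, Sum.inl.injEq, Sum.inr.injEq,
      exists_eq_right, reduceCtorEq, and_false, exists_false, or_false, false_or] at hh
    simp only [Set.mem_preimage, Set.mem_union, Set.mem_diff]
    tauto
  · -- N src
    rw [← hsrc, comp_srcSet]
  · -- M pre ⊆
    intro q hq
    exact hpre (hpre' ▸ Or.inr ⟨q, hq, rfl⟩)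
  · -- M post disjoint
    ext q
    simp only [Set.mem_inter_iff, Set.mem_empty_iff_false, iff_false, not_and]
    intro hq hz
    have : Sum.inr q ∈ (N.comp M).postSet U := hpost' ▸ Or.inr ⟨q, hq, rfl⟩
    exact absurd (Set.eq_empty_iff_forall_notMem.1 hpost (Sum.inr q) ⟨this, hz⟩) not_false
  · -- M marking equation
    ext q
    have hh := Set.ext_iff.1 hZ' (Sum.inr q)
    rw [hpre', hpost'] at hh
    simp only [Set.mem_union, Set.mem_diff, Set.mem_image, Sum.inl.injEq, Sum.inr.injEq,
      exists_eq_right, reduceCtorEq, and_false, exists_false, or_false, false_or] at hh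
    simp only [Set.mem_preimage, Set.mem_union, Set.mem_diff]
    tauto
  · -- M tgt
    rw [← htgt, comp_tgtSet]

end NetNFAAux
open Net BNFA in
/-- the NFA translation is functorial on composition. -/
theorem netNFA_comp_iso {P Q T₁ T₂ : Type} {k l m : ℕ}
    (N : Net P T₁ k l) (M : Net Q T₂ l m)
    (hN : N.BoundaryInj) (hM : M.BoundaryInj)
    (I F : Set (Set P)) (I' F' : Set (Set Q)) :
    Iso
      (netNFA (N.comp M)
        {Z | ∃ X ∈ I, ∃ X' ∈ I', Z = mU X X'}
        {Z | ∃ Y ∈ F, ∃ Y' ∈ F', Z = mU Y Y'})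
      ((netNFA N I F).comp (netNFA M I' F')) := by
  have hsplit : ∀ Z : Set (P ⊕ Q), Z = mU (Sum.inl ⁻¹' Z) (Sum.inr ⁻¹' Z) := by
    intro Z; ext (p | q) <;> simp [Net.mU]
  have hmU₁ : ∀ (X : Set P) (X' : Set Q), Sum.inl ⁻¹' (mU X X') = X := by
    intro X X'; ext p; simp [Net.mU]
  have hmU₂ : ∀ (X : Set P) (X' : Set Q), Sum.inr ⁻¹' (mU X X') = X' := by
    intro X X'; ext q; simp [Net.mU]
  refine ⟨{ toFun := fun Z => (Sum.inl ⁻¹' Z, Sum.inr ⁻¹' Z),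
            invFun := fun p => mU p.1 p.2,
            left_inv := fun Z => (hsplit Z).symm,
            right_inv := fun p => Prod.ext (hmU₁ p.1 p.2) (hmU₂ p.1 p.2) }, ?_, ?_, ?_⟩
  · intro Z a Z'
    constructor
    · intro h
      exact NetNFAAux.steps_of_comp_step N M h
    · rintro ⟨γ, h1, h2⟩
      exact NetNFAAux.comp_step_of_steps N M hN hM h1 h2
  · intro Z
    constructor
    · rintro ⟨X, hX, X', hX', rfl⟩
      exact ⟨by show Sum.inl ⁻¹' (mU X X') ∈ _; rw [hmU₁]; exact hX,
        by show Sum.inr ⁻¹' (mU X X') ∈ _; rw [hmU₂]; exact hX'⟩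
    · rintro ⟨h1, h2⟩
      exact ⟨_, h1, _, h2, hsplit Z⟩
  · intro Z
    constructor
    · rintro ⟨X, hX, X', hX', rfl⟩
      exact ⟨by show Sum.inl ⁻¹' (mU X X') ∈ _; rw [hmU₁]; exact hX,
        by show Sum.inr ⁻¹' (mU X X') ∈ _; rw [hmU₂]; exact hX'⟩
    · rintro ⟨h1, h2⟩
      exact ⟨_, h1, _, h2, hsplit Z⟩
end
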